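/- Let r ≥ 1 and let m_1, …, m_r and n_1, …, n_r be positive integers. If gcd(m_i, n_j) = 1 for all indices with 1 ≤ i ≤ j ≤ r, then the group G_{m_1,n_1,…,m_r,n_r} presented by ⟨x_1, …, x_r : x_1^{m_1} = 1, x_1^{n_1} = x_2^{m_2}, …, x_{r-1}^{n_{r-1}} = x_r^{m_r}, x_r^{n_r} = 1⟩ is the trivial group. -/

import Mathlib

/-!
Call `k` good for `x_i` if `x_i ^ k = 1` and `k` is coprime to every `n_j` with `j ≥ i`.
Going up the chain, `m_1` is good for `x_1`, and if `k` is good for `x_i` then `m_{i+1} k` is good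
for `x_{i+1}`, since `x_{i+1} ^ (m_{i+1} k) = (x_i ^ k) ^ n_i = 1`. Going back down, `x_r ^ n_r = 1`
and `x_i ^ n_i = x_{i+1} ^ m_{i+1}`, so once `x_{i+1} = 1` we get `x_i ^ n_i = 1`; as `x_i` is also
killed by a good exponent, which is coprime to `n_i`, `x_i = 1`. So every generator is trivial.
-/

/-- The relators of the group `G_{m_1,n_1,…,m_r,n_r} = ⟨x_1, …, x_r :
x_1^{m_1} = 1, x_i^{n_i} = x_{i+1}^{m_{i+1}} (i = 1, …, r−1), x_r^{n_r} = 1⟩`,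
as elements of the free group on `r = r' + 1` generators. -/
def fullRels (r' : ℕ) (m n : Fin (r' + 1) → ℕ) :
    Set (FreeGroup (Fin (r' + 1))) :=
  {FreeGroup.of (0 : Fin (r' + 1)) ^ m 0} ∪
    Set.range (fun i : Fin r' =>
      FreeGroup.of i.castSucc ^ n i.castSucc * (FreeGroup.of i.succ ^ m i.succ)⁻¹) ∪
    {FreeGroup.of (Fin.last r') ^ n (Fin.last r')}

section Chain

variable {M : Type*} [Monoid M] {r' : ℕ} {m n : Fin (r' + 1) → ℕ} {g : Fin (r' + 1) → M}

theorem exists_pow_eq_one_coprime_of_chain (h0 : g 0 ^ m 0 = 1)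
    (hchain : ∀ i : Fin r', g i.castSucc ^ n i.castSucc = g i.succ ^ m i.succ)
    (hcop : ∀ i j, i ≤ j → (m i).Coprime (n j)) (i : Fin (r' + 1)) :
    ∃ k, g i ^ k = 1 ∧ ∀ j, i ≤ j → k.Coprime (n j) := by
  induction i using Fin.induction with
  | zero => exact ⟨m 0, h0, hcop 0⟩
  | succ i ih =>
    obtain ⟨k, hk, hk_cop⟩ := ih
    refine ⟨m i.succ * k, ?_, fun j hj => (hcop i.succ j hj).mul_left (hk_cop j ?_)⟩
    · rw [pow_mul, ← hchain i, ← pow_mul, pow_mul', hk, one_pow]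
    · exact Fin.castSucc_lt_succ.le.trans hj

theorem eq_one_of_chain (h0 : g 0 ^ m 0 = 1)
    (hchain : ∀ i : Fin r', g i.castSucc ^ n i.castSucc = g i.succ ^ m i.succ)
    (hlast : g (Fin.last r') ^ n (Fin.last r') = 1)
    (hcop : ∀ i j, i ≤ j → (m i).Coprime (n j)) (i : Fin (r' + 1)) : g i = 1 := by
  have of_pow_n_eq_one (i : Fin (r' + 1)) (hi : g i ^ n i = 1) : g i = 1 := by
    obtain ⟨k, hk, hk_cop⟩ := exists_pow_eq_one_coprime_of_chain h0 hchain hcop i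
    exact (pow_eq_one_iff_of_coprime (hk_cop i le_rfl)).1 ⟨hk, hi⟩
  induction i using Fin.reverseInduction with
  | last => exact of_pow_n_eq_one _ hlast
  | cast i ih => exact of_pow_n_eq_one _ (by rw [hchain i, ih, one_pow])

end Chain

theorem full_presented_group_trivial_general (r' : ℕ)
    (m n : Fin (r' + 1) → ℕ)
    (hgcd : ∀ i j : Fin (r' + 1), i ≤ j → Nat.gcd (m i) (n j) = 1) :
    ∀ x : PresentedGroup (fullRels r' m n), x = 1 := by
  set R := fullRels r' m n
  have of_pow (i : Fin (r' + 1)) (k : ℕ) :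
      (PresentedGroup.of i : PresentedGroup R) ^ k = PresentedGroup.mk R (FreeGroup.of i ^ k) :=
    (map_pow _ _ _).symm
  have hgen : ∀ i, (PresentedGroup.of i : PresentedGroup R) = 1 := by
    refine eq_one_of_chain ?_ (fun i => ?_) ?_ hgcd
    · rw [of_pow]
      exact PresentedGroup.one_of_mem (Or.inl (Or.inl rfl))
    · rw [of_pow, of_pow]
      exact PresentedGroup.mk_eq_mk_of_mul_inv_mem (Or.inl (Or.inr ⟨i, rfl⟩))
    · rw [of_pow]
      exact PresentedGroup.one_of_mem (Or.inr rfl)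
  have hid : MonoidHom.id (PresentedGroup R) = 1 := PresentedGroup.ext hgen
  exact fun x => DFunLike.congr_fun hid x

/-- If `gcd(m_i, n_j) = 1` for all `1 ≤ i ≤ j ≤ r`, then the group
`G_{m_1,n_1,…,m_r,n_r}` is trivial. -/
theorem full_presented_group_trivial (r' : ℕ)
    (m n : Fin (r' + 1) → ℕ)
    (hm : ∀ i, 0 < m i) (hn : ∀ j, 0 < n j)
    (hgcd : ∀ i j : Fin (r' + 1), i ≤ j → Nat.gcd (m i) (n j) = 1) :
    ∀ x : PresentedGroup (fullRels r' m n), x = 1 :=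
  full_presented_group_trivial_general r' m n hgcd
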